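/- arXiv:2005.07803 — 3 statements merged into one kernel-verified Lean document; each statement's English description precedes it below -/
import Mathlib

section
/- Let M be a Hermitian positive semidefinite block matrix [[A, B],[B^H, C]] where A and C are square. If A = x x^H for some vector x, then there exists a vector y such that B = x y^H. -/
open Matrix
open scoped ComplexOrder

/-!
Test `M` against `(u, 0)` with `u ⟂ x`: then `Au = 0`, so the quadratic form of `M` vanishes
there, and positivity forces `M (u, 0) = 0`, whose lower block says `Bᴴ u = 0`. A linear map
vanishing on the hyperplane `x⊥` is a multiple of `u ↦ xᴴ u`, so `Bᴴ = y xᴴ` and `B = x yᴴ`.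
-/

namespace Matrix

theorem exists_eq_vecMulVec_of_dotProduct_eq_zero {ι κ K : Type*} [Fintype κ] [Field K]
    {N : Matrix ι κ K} {v : κ → K} (h : ∀ u, v ⬝ᵥ u = 0 → N *ᵥ u = 0) :
    ∃ y, N = vecMulVec y v := by
  classical
  obtain ⟨y, hy⟩ : ∃ y, ∀ u, N *ᵥ u = (v ⬝ᵥ u) • y := by
    by_cases hv : v = 0
    · exact ⟨0, fun u => by simpa using h u (by simp [hv])⟩
    obtain ⟨k, hk⟩ := Function.ne_iff.mp hv
    set w : κ → K := Pi.single k (v k)⁻¹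
    have hw : v ⬝ᵥ w = 1 := by rw [dotProduct_single, mul_inv_cancel₀ hk]
    refine ⟨N *ᵥ w, fun u => ?_⟩
    have := h (u - (v ⬝ᵥ u) • w) (by simp [dotProduct_sub, dotProduct_smul, hw])
    rwa [mulVec_sub, mulVec_smul, sub_eq_zero] at this
  refine ⟨y, ext_iff_mulVec.mpr fun u => ?_⟩
  rw [hy, vecMulVec_mulVec, op_smul_eq_smul]

theorem PosSemidef.mulVec_eq_zero_of_fromBlocks {𝕜 m n : Type*} [RCLike 𝕜] [Fintype m]
    [Fintype n] {A : Matrix m m 𝕜} {B : Matrix m n 𝕜} {D : Matrix n m 𝕜} {C : Matrix n n 𝕜}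
    (hM : (fromBlocks A B D C).PosSemidef) {u : m → 𝕜} (hu : A *ᵥ u = 0) : D *ᵥ u = 0 := by
  have hMz : fromBlocks A B D C *ᵥ Sum.elim u 0 = 0 := by
    rw [← hM.dotProduct_mulVec_zero_iff, fromBlocks_mulVec]
    simp [dotProduct, Fintype.sum_sum_type, hu]
  ext j
  simpa [fromBlocks_mulVec] using congrFun hMz (Sum.inr j)

end Matrix

/-- If `M = [[A, B],[Bᴴ, C]]` is positive semidefinite (hence Hermitian) and
`A = x xᴴ` for some vector `x`, then `B = x yᴴ` for some vector `y`. -/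
theorem stmt_0 {m n : ℕ} (A : Matrix (Fin m) (Fin m) ℂ) (B : Matrix (Fin m) (Fin n) ℂ)
    (C : Matrix (Fin n) (Fin n) ℂ) (x : Fin m → ℂ)
    (hM : (Matrix.fromBlocks A B Bᴴ C).PosSemidef)
    (hA : A = Matrix.vecMulVec x (star x)) :
    ∃ y : Fin n → ℂ, B = Matrix.vecMulVec x (star y) := by
  have hBx : ∀ u, star x ⬝ᵥ u = 0 → Bᴴ *ᵥ u = 0 := fun u hu =>
    hM.mulVec_eq_zero_of_fromBlocks (by rw [hA, vecMulVec_mulVec, hu]; simp)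
  obtain ⟨y, hy⟩ := exists_eq_vecMulVec_of_dotProduct_eq_zero hBx
  exact ⟨y, by rw [← conjTranspose_conjTranspose B, hy, conjTranspose_vecMulVec, star_star]⟩
end

section
/- Let M = [[x x^H, x y^H],[y x^H, C]] be Hermitian positive semidefinite with x ≠ 0. Then C - y y^H is positive semidefinite. -/
open Matrix
open scoped ComplexOrder

namespace Matrix

variable {m n R : Type*} [Fintype m] [Fintype n] [DecidableEq n]
  [Ring R] [PartialOrder R] [StarRing R]

-- A Schur complement without inverting `A`: congruence by `[[-T], [1]]` clears the off-diagonal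
-- blocks and leaves `D - Bᴴ T` in the corner.
theorem PosSemidef.sub_conjTranspose_mul_of_fromBlocks {A : Matrix m m R} {B T : Matrix m n R}
    {D : Matrix n n R} (hM : (fromBlocks A B Bᴴ D).PosSemidef) (hT : A * T = B) :
    (D - Bᴴ * T).PosSemidef := by
  have hP := hM.conjTranspose_mul_mul_same (fromRows (-T) 1)
  rwa [conjTranspose_fromRows_eq_fromCols_conjTranspose, Matrix.mul_assoc,
    fromBlocks_mul_fromRows, fromCols_mul_fromRows, Matrix.mul_neg, hT, Matrix.mul_one,
    Matrix.mul_one, neg_add_cancel, Matrix.mul_zero, zero_add, conjTranspose_one, Matrix.one_mul,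
    Matrix.mul_neg, neg_add_eq_sub] at hP

end Matrix

theorem stmt_1_general {m n : ℕ} (x : Fin m → ℂ) (y : Fin n → ℂ) (C : Matrix (Fin n) (Fin n) ℂ)
    (hx : x ≠ 0)
    (hM : (Matrix.fromBlocks (Matrix.vecMulVec x (star x)) (Matrix.vecMulVec x (star y))
      (Matrix.vecMulVec y (star x)) C).PosSemidef) :
    (C - Matrix.vecMulVec y (star y)).PosSemidef := by
  have hnorm : star x ⬝ᵥ ((star x ⬝ᵥ x)⁻¹ • x) = 1 := by
    rw [dotProduct_smul, smul_eq_mul, inv_mul_cancel₀ (dotProduct_star_self_eq_zero.not.mpr hx)]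
  have hB : (vecMulVec x (star y))ᴴ = vecMulVec y (star x) := by
    rw [conjTranspose_vecMulVec, star_star]
  rw [← hB] at hM
  have hSchur := hM.sub_conjTranspose_mul_of_fromBlocks (T := vecMulVec ((star x ⬝ᵥ x)⁻¹ • x) (star y))
    (by rw [vecMulVec_mul_vecMulVec, hnorm, one_smul])
  rwa [hB, vecMulVec_mul_vecMulVec, hnorm, one_smul] at hSchur

/-- If `M = [[x xᴴ, x yᴴ],[y xᴴ, C]]` is positive semidefinite with `x ≠ 0` and `C`
Hermitian, then `C - y yᴴ` is positive semidefinite. -/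
theorem stmt_1 {m n : ℕ} (x : Fin m → ℂ) (y : Fin n → ℂ) (C : Matrix (Fin n) (Fin n) ℂ)
    (hx : x ≠ 0) (hC : C.IsHermitian)
    (hM : (Matrix.fromBlocks (Matrix.vecMulVec x (star x)) (Matrix.vecMulVec x (star y))
      (Matrix.vecMulVec y (star x)) C).PosSemidef) :
    (C - Matrix.vecMulVec y (star y)).PosSemidef :=
  stmt_1_general x y C hx hM
end

section
/- Let M = [[x x^H, x y^H],[y x^H, C]] be Hermitian positive semidefinite with x ≠ 0. Then trace(M) ≥ x^H x + y^H y, with equality if and only if C = y y^H. -/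
open Matrix
open scoped ComplexOrder

/-!
Writing `w = (x, y)`, the block matrix splits as `M = w wᴴ + diag(0, C - y yᴴ)`. Since `x ≠ 0`,
every `v` extends to a vector `(u, v)` orthogonal to `w`, and the quadratic form of `M` there is
`vᴴ (C - y yᴴ) v`; hence `C - y yᴴ` is positive semidefinite. Taking traces,
`tr M = xᴴx + yᴴy + tr (C - y yᴴ)`, and a positive semidefinite matrix has nonnegative trace,
vanishing only at `0`.
-/

namespace Matrix

variable {m n α : Type*}

theorem fromBlocks_vecMulVec_star_eq [Ring α] [Star α] (x : m → α) (y : n → α)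
    (C : Matrix n n α) :
    fromBlocks (vecMulVec x (star x)) (vecMulVec x (star y)) (vecMulVec y (star x)) C =
      vecMulVec (Sum.elim x y) (star (Sum.elim x y)) +
        fromBlocks 0 0 0 (C - vecMulVec y (star y)) := by
  ext (i | i) (j | j) <;> simp [vecMulVec]

theorem trace_fromBlocks_zero_zero_zero [Fintype m] [Fintype n] [AddCommMonoid α]
    (D : Matrix n n α) : (fromBlocks (0 : Matrix m m α) 0 0 D).trace = D.trace := by
  simp [trace, Fintype.sum_sum_type]

variable [Fintype m] [Fintype n] {𝕜 : Type*} [RCLike 𝕜]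

theorem exists_star_dotProduct_eq {x : m → 𝕜} (hx : x ≠ 0) (t : 𝕜) :
    ∃ u, star x ⬝ᵥ u = t :=
  ⟨(t / (star x ⬝ᵥ x)) • x, by
    rw [dotProduct_smul, smul_eq_mul, div_mul_cancel₀ _ (dotProduct_star_self_eq_zero.not.mpr hx)]⟩

theorem PosSemidef.of_vecMulVec_add_fromBlocks_zero {x : m → 𝕜} (hx : x ≠ 0) (y : n → 𝕜)
    {D : Matrix n n 𝕜}
    (h : (vecMulVec (Sum.elim x y) (star (Sum.elim x y)) + fromBlocks 0 0 0 D).PosSemidef) :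
    D.PosSemidef := by
  set w := Sum.elim x y
  have hD : D.IsHermitian := by
    have := h.isHermitian.sub (posSemidef_vecMulVec_self_star w).isHermitian
    exact (isHermitian_fromBlocks_iff.mp (by simpa using this)).2.2.2
  refine .of_dotProduct_mulVec_nonneg hD fun v => ?_
  obtain ⟨u, hu⟩ := exists_star_dotProduct_eq hx (-(star y ⬝ᵥ v))
  have horth : star x ⬝ᵥ u + star y ⬝ᵥ v = 0 := by rw [hu, neg_add_cancel]
  simpa [w, add_mulVec, vecMulVec_mulVec, horth, fromBlocks_mulVec, Function.star_sumElim,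
    sumElim_dotProduct_sumElim] using h.dotProduct_mulVec_nonneg (Sum.elim u v)

end Matrix

theorem stmt_2_general {m n : ℕ} (x : Fin m → ℂ) (y : Fin n → ℂ) (C : Matrix (Fin n) (Fin n) ℂ)
    (hx : x ≠ 0)
    (hM : (Matrix.fromBlocks (Matrix.vecMulVec x (star x)) (Matrix.vecMulVec x (star y))
      (Matrix.vecMulVec y (star x)) C).PosSemidef) :
    star x ⬝ᵥ x + star y ⬝ᵥ y ≤ (Matrix.fromBlocks (Matrix.vecMulVec x (star x))
        (Matrix.vecMulVec x (star y)) (Matrix.vecMulVec y (star x)) C).trace ∧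
      ((Matrix.fromBlocks (Matrix.vecMulVec x (star x)) (Matrix.vecMulVec x (star y))
          (Matrix.vecMulVec y (star x)) C).trace = star x ⬝ᵥ x + star y ⬝ᵥ y ↔
        C = Matrix.vecMulVec y (star y)) := by
  rw [fromBlocks_vecMulVec_star_eq] at hM ⊢
  have hD := hM.of_vecMulVec_add_fromBlocks_zero hx y
  have htrace : (vecMulVec (Sum.elim x y) (star (Sum.elim x y)) +
      fromBlocks 0 0 0 (C - vecMulVec y (star y))).trace =
      star x ⬝ᵥ x + star y ⬝ᵥ y + (C - vecMulVec y (star y)).trace := by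
    rw [trace_add, trace_vecMulVec, trace_fromBlocks_zero_zero_zero, dotProduct_comm,
      Function.star_sumElim, sumElim_dotProduct_sumElim]
  rw [htrace, add_eq_left, hD.trace_eq_zero_iff, sub_eq_zero]
  exact ⟨le_add_of_nonneg_right hD.trace_nonneg, Iff.rfl⟩

/-- For `M = [[x xᴴ, x yᴴ],[y xᴴ, C]]` positive semidefinite with `x ≠ 0` and `C`
Hermitian: `trace M ≥ xᴴx + yᴴy`, with equality iff `C = y yᴴ`. -/
theorem stmt_2 {m n : ℕ} (x : Fin m → ℂ) (y : Fin n → ℂ) (C : Matrix (Fin n) (Fin n) ℂ)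
    (hx : x ≠ 0) (hC : C.IsHermitian)
    (hM : (Matrix.fromBlocks (Matrix.vecMulVec x (star x)) (Matrix.vecMulVec x (star y))
      (Matrix.vecMulVec y (star x)) C).PosSemidef) :
    star x ⬝ᵥ x + star y ⬝ᵥ y ≤ (Matrix.fromBlocks (Matrix.vecMulVec x (star x))
        (Matrix.vecMulVec x (star y)) (Matrix.vecMulVec y (star x)) C).trace ∧
      ((Matrix.fromBlocks (Matrix.vecMulVec x (star x)) (Matrix.vecMulVec x (star y))
          (Matrix.vecMulVec y (star x)) C).trace = star x ⬝ᵥ x + star y ⬝ᵥ y ↔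
        C = Matrix.vecMulVec y (star y)) :=
  stmt_2_general x y C hx hM
end
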